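/- Let R and n be natural numbers with R > 1, and suppose n ≤ N, where N = 3^k if R = 3k, N = 4·3^{k-1} if R = 3k+1 (with k ≥ 1), and N = 2·3^k if R = 3k+2. Then there exist a natural number p and real matrices X_1, …, X_p of size n × n such that the entrywise (Hadamard) product X_1 ∘ X_2 ∘ ⋯ ∘ X_p equals the n × n identity matrix, the rank r_i of each X_i satisfies r_i ∈ {2,3}, and the ranks sum to at most R, i.e. ∑_{i=1}^p r_i ≤ R. -/

import Mathlib

/-!
If `f : ι → α` and `g : ι → κ` are surjective and jointly injective, then
`1_ι = 1_α[f, f] ∘ 1_κ[g, g]`, and the factors of any Hadamard decomposition of `1_κ`,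
pulled back along `g`, multiply to `1_κ[g, g]`. Pulling back along a surjection preserves
rank, so a decomposition of `1_κ` with budget `R` yields one of `1_ι` with budget `R + |α|`.
On `Fin n` the maps `(· % m)` and `(· / m)` reduce `n` to `⌈n / m⌉` at cost `m`; using
`m = 3` repeatedly and `m = 2` once or twice gives the three capacities.
-/

open Matrix

namespace Matrix

theorem rank_submatrix_of_surjective {m n m₀ n₀ R : Type*} [Fintype n] [Fintype n₀]
    [CommSemiring R] [StrongRankCondition R] (A : Matrix m n R) {r : m₀ → m} {c : n₀ → n}
    (hr : Function.Surjective r) (hc : Function.Surjective c) :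
    (A.submatrix r c).rank = A.rank := by
  refine (rank_submatrix_le A r c).antisymm ?_
  calc A.rank
      = ((A.submatrix r c).submatrix (Function.surjInv hr) (Function.surjInv hc)).rank := by
        rw [submatrix_submatrix, (Function.rightInverse_surjInv hr).comp_eq_id,
          (Function.rightInverse_surjInv hc).comp_eq_id, submatrix_id_id]
    _ ≤ (A.submatrix r c).rank := rank_submatrix_le _ _ _

end Matrix

variable (K : Type*) [Field K]

def HasIdentityHadamardDecomposition (ι : Type*) [Fintype ι] [DecidableEq ι] (R : ℕ) : Prop :=
  ∃ (p : ℕ) (X : Fin p → Matrix ι ι K),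
    (Matrix.of fun i j => ∏ l, X l i j) = 1 ∧
    (∀ l, (X l).rank = 2 ∨ (X l).rank = 3) ∧
    (∑ l, (X l).rank) ≤ R

variable {K}

namespace HasIdentityHadamardDecomposition

variable {ι κ α : Type*} [Fintype ι] [DecidableEq ι] [Fintype κ] [DecidableEq κ]
  [Fintype α] [DecidableEq α]

theorem mono {R R' : ℕ} (h : HasIdentityHadamardDecomposition K ι R) (hR : R ≤ R') :
    HasIdentityHadamardDecomposition K ι R' :=
  let ⟨p, X, hX, hrank, hsum⟩ := h
  ⟨p, X, hX, hrank, hsum.trans hR⟩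

theorem of_subsingleton [Subsingleton ι] (R : ℕ) : HasIdentityHadamardDecomposition K ι R :=
  ⟨0, Fin.elim0, by ext i j; obtain rfl := Subsingleton.elim i j; simp, fun l => l.elim0,
    by simp⟩

theorem of_card (h : Fintype.card ι = 2 ∨ Fintype.card ι = 3) :
    HasIdentityHadamardDecomposition K ι (Fintype.card ι) :=
  ⟨1, fun _ => 1, by ext i j; simp, fun _ => by rwa [rank_one], by simp [rank_one]⟩

theorem of_le_three (h : Fintype.card ι ≤ 3) :
    HasIdentityHadamardDecomposition K ι (Fintype.card ι) := by
  by_cases h1 : Fintype.card ι ≤ 1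
  · have := Fintype.card_le_one_iff_subsingleton.mp h1
    exact of_subsingleton _
  · exact of_card (by omega)

theorem comp {R : ℕ} (h : HasIdentityHadamardDecomposition K κ R)
    (hα : Fintype.card α = 2 ∨ Fintype.card α = 3) {f : ι → α} {g : ι → κ}
    (hf : Function.Surjective f) (hg : Function.Surjective g)
    (hfg : Function.Injective fun i => (f i, g i)) :
    HasIdentityHadamardDecomposition K ι (R + Fintype.card α) := by
  obtain ⟨p, X, hX, hrank, hsum⟩ := h
  have hrank_pullback (l : Fin p) : ((X l).submatrix g g).rank = (X l).rank :=
    rank_submatrix_of_surjective _ hg hg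
  have hrank_first : ((1 : Matrix α α K).submatrix f f).rank = Fintype.card α := by
    rw [rank_submatrix_of_surjective _ hf hf, rank_one]
  refine ⟨p + 1, Fin.cons ((1 : Matrix α α K).submatrix f f) fun l => (X l).submatrix g g,
    ?_, ?_, ?_⟩
  · ext i j
    have hprod : ∏ l, X l (g i) (g j) = (1 : Matrix κ κ K) (g i) (g j) := by
      simpa using congrFun (congrFun hX (g i)) (g j)
    have hsplit : (f i = f j ∧ g i = g j) ↔ i = j := by simpa using hfg.eq_iff (a := i) (b := j)
    simp only [of_apply, Fin.prod_univ_succ, Fin.cons_zero, Fin.cons_succ, submatrix_apply,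
      hprod, one_apply, mul_ite, ite_mul, mul_one, mul_zero, ite_self, ← hsplit, ite_and]
  · refine Fin.cases ?_ fun l => ?_
    · simpa [hrank_first] using hα
    · simpa [hrank_pullback] using hrank l
  · simp only [Fin.sum_univ_succ, Fin.cons_zero, Fin.cons_succ, hrank_first, hrank_pullback]
    omega

theorem fin_of_divMod {m n n' R : ℕ}
    (h : HasIdentityHadamardDecomposition K (Fin n') R) (hm : m = 2 ∨ m = 3) (hmn : m ≤ n)
    (hn : n ≤ m * n') (hn' : m * n' < n + m) :
    HasIdentityHadamardDecomposition K (Fin n) (R + m) := by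
  have hm0 : 0 < m := by omega
  have hdiv (i : Fin n) : i / m < n' := by
    rw [Nat.div_lt_iff_lt_mul hm0, mul_comm]; omega
  have hf : Function.Surjective fun i : Fin n => (⟨i % m, Nat.mod_lt _ hm0⟩ : Fin m) :=
    fun b => ⟨⟨b, by omega⟩, Fin.ext (Nat.mod_eq_of_lt b.2)⟩
  have hg : Function.Surjective fun i : Fin n => (⟨i / m, hdiv i⟩ : Fin n') := by
    intro a
    have : m * a < n := by nlinarith [a.2]
    exact ⟨⟨m * a, this⟩, Fin.ext (Nat.mul_div_cancel_left _ hm0)⟩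
  have hfg : Function.Injective fun i : Fin n =>
      ((⟨i % m, Nat.mod_lt _ hm0⟩ : Fin m), (⟨i / m, hdiv i⟩ : Fin n')) := by
    intro i j hij
    simp only [Prod.mk.injEq, Fin.mk.injEq] at hij
    rw [Fin.ext_iff, ← Nat.div_add_mod i m, ← Nat.div_add_mod j m, hij.1, hij.2]
  simpa using h.comp (by simpa using hm) hf hg hfg

end HasIdentityHadamardDecomposition

open HasIdentityHadamardDecomposition

theorem hasIdentityHadamardDecomposition_fin_of_le_mul {m N R : ℕ} (hm : m = 2 ∨ m = 3)
    (h : ∀ n ≤ N, HasIdentityHadamardDecomposition K (Fin n) R) {n : ℕ} (hn : n ≤ m * N) :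
    HasIdentityHadamardDecomposition K (Fin n) (R + m) := by
  rcases lt_or_ge n m with hnm | hmn
  · exact (of_le_three (by simp only [Fintype.card_fin]; omega)).mono
      (by simp only [Fintype.card_fin]; omega)
  have hm0 : 0 < m := by omega
  have hceil := Nat.div_add_mod (n + m - 1) m
  have hmod := Nat.mod_lt (n + m - 1) hm0
  refine (h ((n + m - 1) / m) ?_).fin_of_divMod hm hmn (by omega) (by omega)
  rw [Nat.div_le_iff_le_mul_add_pred hm0]
  omega

theorem hasIdentityHadamardDecomposition_fin_of_le_three_pow (k : ℕ) :
    ∀ n ≤ 3 ^ k, HasIdentityHadamardDecomposition K (Fin n) (3 * k) := by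
  induction k with
  | zero =>
    intro n hn
    have : Subsingleton (Fin n) := Fin.subsingleton_iff_le_one.mpr (by simpa using hn)
    exact of_subsingleton _
  | succ k ih =>
    intro n hn
    exact hasIdentityHadamardDecomposition_fin_of_le_mul (Or.inr rfl) ih
      (by rwa [pow_succ'] at hn)

theorem identity_hadamard_decomposition_general (R n : ℕ)
    (hn : (∃ k : ℕ, R = 3 * k ∧ n ≤ 3 ^ k) ∨
          (∃ k : ℕ, 1 ≤ k ∧ R = 3 * k + 1 ∧ n ≤ 4 * 3 ^ (k - 1)) ∨
          (∃ k : ℕ, R = 3 * k + 2 ∧ n ≤ 2 * 3 ^ k)) :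
    ∃ (p : ℕ) (X : Fin p → Matrix (Fin n) (Fin n) ℝ),
      (Matrix.of fun i j => ∏ l, X l i j) = (1 : Matrix (Fin n) (Fin n) ℝ) ∧
      (∀ l, (X l).rank = 2 ∨ (X l).rank = 3) ∧
      (∑ l, (X l).rank) ≤ R := by
  have budget_two_more {N R : ℕ} (h : ∀ n ≤ N, HasIdentityHadamardDecomposition ℝ (Fin n) R)
      (n : ℕ) (hn : n ≤ 2 * N) : HasIdentityHadamardDecomposition ℝ (Fin n) (R + 2) :=
    hasIdentityHadamardDecomposition_fin_of_le_mul (Or.inl rfl) h hn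
  rcases hn with ⟨k, rfl, hn⟩ | ⟨k, hk, rfl, hn⟩ | ⟨k, rfl, hn⟩
  · exact hasIdentityHadamardDecomposition_fin_of_le_three_pow k n hn
  · obtain ⟨j, rfl⟩ : ∃ j, k = j + 1 := ⟨k - 1, by omega⟩
    show HasIdentityHadamardDecomposition ℝ (Fin n) (3 * j + 2 + 2)
    exact budget_two_more
      (budget_two_more (hasIdentityHadamardDecomposition_fin_of_le_three_pow j)) n
      (by simpa [← mul_assoc] using hn)
  · exact budget_two_more (hasIdentityHadamardDecomposition_fin_of_le_three_pow k) n hn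

/-- For `R > 1` and `n ≤ N` (where `N` depends on `R mod 3` as in the theorem),
the `n × n` identity matrix admits a Hadamard decomposition into matrices of rank 2 or 3
whose ranks sum to at most `R`. -/
theorem identity_hadamard_decomposition (R n : ℕ) (hR : 1 < R)
    (hn : (∃ k : ℕ, R = 3 * k ∧ n ≤ 3 ^ k) ∨
          (∃ k : ℕ, 1 ≤ k ∧ R = 3 * k + 1 ∧ n ≤ 4 * 3 ^ (k - 1)) ∨
          (∃ k : ℕ, R = 3 * k + 2 ∧ n ≤ 2 * 3 ^ k)) :
    ∃ (p : ℕ) (X : Fin p → Matrix (Fin n) (Fin n) ℝ),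
      (Matrix.of fun i j => ∏ l, X l i j) = (1 : Matrix (Fin n) (Fin n) ℝ) ∧
      (∀ l, (X l).rank = 2 ∨ (X l).rank = 3) ∧
      (∑ l, (X l).rank) ≤ R :=
  identity_hadamard_decomposition_general R n hn
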